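/- Let a, b, λ, K > 0 with a > b/λ. Let U : [0, ∞) → ℝ be continuously differentiable with U(0) ≤ 0 and suppose that for all t ≥ 0: U'(t) + a U(t) ≤ b ∫_0^t e^{−λ(t−s)} max(U(s), 0) ds + K e^{−λ t}. Then U(t) ≤ K / (a − b/λ) for all t ≥ 0. -/

import Mathlib

/-!
Suppose `U(t₁) > K / (a - b/λ)` and let `T` be a maximum point of `U` on `[0, t₁]`, with value
`M = U(T) > 0`. Then `T > 0` because `U(0) ≤ 0`, so `U'(T) ≥ 0` (left maximum), and the memory
term is at most `b M ∫₀ᵀ e^{-λ(T-s)} ds ≤ (b/λ) M`. The inequality at `T` gives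
`a M ≤ (b/λ) M + K`, i.e. `M ≤ K / (a - b/λ)`, a contradiction.
-/

open Real Set

theorem HasDerivAt.nonneg_of_isMaxOn_Icc {f : ℝ → ℝ} {f' a b : ℝ} (hf : HasDerivAt f f' b)
    (hab : a < b) (hmax : IsMaxOn f (Icc a b) b) : 0 ≤ f' := by
  have hcone : a - b ∈ posTangentConeAt (Icc a b) b :=
    sub_mem_posTangentConeAt_of_segment_subset ((convex_Icc a b).segment_subset
      (right_mem_Icc.2 hab.le) (left_mem_Icc.2 hab.le))
  have := hmax.localize.hasFDerivWithinAt_nonpos hf.hasFDerivAt.hasFDerivWithinAt hcone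
  rw [ContinuousLinearMap.toSpanSingleton_apply, smul_eq_mul] at this
  exact nonneg_of_mul_nonpos_right this (sub_neg.2 hab)

theorem integral_exp_neg_mul_sub (lam T : ℝ) (hlam : lam ≠ 0) :
    ∫ s in (0:ℝ)..T, exp (-lam * (T - s)) = (1 - exp (-lam * T)) / lam := by
  have hderiv : ∀ s ∈ uIcc 0 T,
      HasDerivAt (fun s => exp (-lam * (T - s)) / lam) (exp (-lam * (T - s))) s := by
    intro s _
    refine ((((hasDerivAt_id' s).const_sub T).const_mul (-lam)).exp.div_const lam).congr_deriv ?_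
    field_simp
  rw [intervalIntegral.integral_eq_sub_of_hasDerivAt hderiv
    ((by fun_prop : Continuous fun s => exp (-lam * (T - s))).intervalIntegrable _ _)]
  simp only [sub_self, mul_zero, exp_zero, sub_zero]
  ring

theorem integral_exp_neg_mul_sub_mul_le {f : ℝ → ℝ} {lam T M : ℝ} (hlam : 0 < lam) (hT : 0 ≤ T)
    (hM : 0 ≤ M) (hf : IntervalIntegrable f MeasureTheory.volume 0 T)
    (hfM : ∀ s ∈ Icc 0 T, f s ≤ M) :
    ∫ s in (0:ℝ)..T, exp (-lam * (T - s)) * f s ≤ M / lam := by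
  calc ∫ s in (0:ℝ)..T, exp (-lam * (T - s)) * f s
      ≤ ∫ s in (0:ℝ)..T, exp (-lam * (T - s)) * M :=
        intervalIntegral.integral_mono_on hT (hf.continuousOn_mul (by fun_prop))
          ((by fun_prop : Continuous fun s => exp (-lam * (T - s)) * M).intervalIntegrable _ _)
          fun s hs => mul_le_mul_of_nonneg_left (hfM s hs) (exp_pos _).le
    _ = M * (1 - exp (-lam * T)) / lam := by
        rw [intervalIntegral.integral_mul_const, integral_exp_neg_mul_sub lam T hlam.ne']
        ring
    _ ≤ M / lam :=
        div_le_div_of_nonneg_right (mul_le_of_le_one_right hM (by linarith [exp_pos (-lam * T)]))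
          hlam.le

theorem statement_18_general
    (a b lam K : ℝ) (hb : 0 < b) (hlam : 0 < lam) (hK : 0 < K)
    (hab : b / lam < a)
    (U U' : ℝ → ℝ)
    (hder : ∀ t ≥ (0:ℝ), HasDerivAt U (U' t) t)
    (h0 : U 0 ≤ 0)
    (hineq : ∀ t ≥ (0:ℝ),
      U' t + a * U t ≤
        b * (∫ s in (0:ℝ)..t, Real.exp (-lam * (t - s)) * max (U s) 0)
          + K * Real.exp (-lam * t)) :
    ∀ t ≥ (0:ℝ), U t ≤ K / (a - b / lam) := by
  intro t₁ ht₁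
  by_contra! hgt
  have hd : 0 < a - b / lam := sub_pos.2 hab
  have hUcont : ContinuousOn U (Icc 0 t₁) := fun s hs =>
    (hder s hs.1).continuousAt.continuousWithinAt
  obtain ⟨T, hT, hmax⟩ := isCompact_Icc.exists_isMaxOn (nonempty_Icc.2 ht₁) hUcont
  have hM : K / (a - b / lam) < U T := hgt.trans_le (hmax (right_mem_Icc.2 ht₁))
  have hMpos : 0 < U T := (div_pos hK hd).trans hM
  have hTpos : 0 < T := hT.1.lt_of_ne (by rintro rfl; linarith)
  have hmaxT : IsMaxOn U (Icc 0 T) T := hmax.on_subset (Icc_subset_Icc_right hT.2)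
  have hU'T : 0 ≤ U' T := (hder T hT.1).nonneg_of_isMaxOn_Icc hTpos hmaxT
  have hmemory : ∫ s in (0:ℝ)..T, exp (-lam * (T - s)) * max (U s) 0 ≤ U T / lam :=
    integral_exp_neg_mul_sub_mul_le hlam hT.1 hMpos.le
      (((hUcont.mono (Icc_subset_Icc_right hT.2)).sup continuousOn_const).intervalIntegrable_of_Icc
        hT.1)
      fun s hs => max_le (hmaxT hs) hMpos.le
  have hsource : K * exp (-lam * T) ≤ K :=
    mul_le_of_le_one_right hK.le
      (exp_le_one_iff.2 (mul_nonpos_of_nonpos_of_nonneg (neg_nonpos.2 hlam.le) hT.1))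
  have hbound : (a - b / lam) * U T ≤ K := by
    have := hineq T hT.1
    have := mul_le_mul_of_nonneg_left hmemory hb.le
    calc (a - b / lam) * U T = a * U T - b * (U T / lam) := by ring
      _ ≤ K := by linarith
  exact hM.not_ge ((le_div_iff₀' hd).2 hbound)

/-- Gronwall-type inequality with decaying memory, from the
large-frequency estimate of the heat-kernel appendix.
If `a > b/λ`, `U(0) ≤ 0` and
`U'(t) + a U(t) ≤ b ∫₀ᵗ e^{-λ(t-s)} max(U(s),0) ds + K e^{-λt}` for `t ≥ 0`,
then `U(t) ≤ K/(a - b/λ)` for all `t ≥ 0`. -/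
theorem statement_18
    (a b lam K : ℝ) (ha : 0 < a) (hb : 0 < b) (hlam : 0 < lam) (hK : 0 < K)
    (hab : b / lam < a)
    (U U' : ℝ → ℝ)
    (hder : ∀ t ≥ (0:ℝ), HasDerivAt U (U' t) t)
    (hcont : ContinuousOn U' (Ici 0))
    (h0 : U 0 ≤ 0)
    (hineq : ∀ t ≥ (0:ℝ),
      U' t + a * U t ≤
        b * (∫ s in (0:ℝ)..t, Real.exp (-lam * (t - s)) * max (U s) 0)
          + K * Real.exp (-lam * t)) :
    ∀ t ≥ (0:ℝ), U t ≤ K / (a - b / lam) :=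
  statement_18_general a b lam K hb hlam hK hab U U' hder h0 hineq
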